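/- arXiv:2308.05570 — 7 statements merged into one kernel-verified Lean document; each statement's English description precedes it below -/
import Mathlib

section
/- In the two-stage market with intercept-function bidding and price-taking participants, any tuple (β_j^d, β_j^r, d_l^d, d_l^r, λ^d, λ^r) satisfying: (i) β_j^d + β_j^r = ((b^d + b^r − c_j⁻¹)/Σ_k c_k⁻¹)·d for all j, (ii) the market-clearing equations Σ_j (b^d λ^d − β_j^d) = Σ_l d_l^d and Σ_j (b^r λ^r − β_j^r) = Σ_l d_l^r, (iii) d_l^d + d_l^r = d_l for all l, and (iv) λ^d = λ^r = d/Σ_k c_k⁻¹, is a competitive equilibrium: each generator's aggregate dispatch maximizes its profit π_j = λ^d g_j^d + λ^r g_j^r − (c_j/2)(g_j^d + g_j^r)² at the given prices, each load's allocation minimizes its payment λ^d d_l^d + λ^r (d_l − d_l^d), and markets clear. Moreover the resulting total dispatch of generator j equals (c_j⁻¹/Σ_k c_k⁻¹)·d, coinciding with the social planner optimum. -/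
open Finset

/-- Quadratic profit is maximized where marginal cost equals price. -/
lemma profit_max_aux (cc lam s g : ℝ) (hcc : 0 < cc) (hg : cc * g = lam) :
    lam * s - cc / 2 * s ^ 2 ≤ lam * g - cc / 2 * g ^ 2 := by
  nlinarith [sq_nonneg (cc * s - lam), mul_pos hcc hcc, sq_nonneg (s - g)]

/-- Any tuple satisfying conditions (i)-(iv) is a competitive equilibrium of the
standard two-stage market with intercept-function bidding, and the resulting
total dispatch of each generator coincides with the social planner optimum. -/
theorem standard_market_competitive_equilibrium
    (G L : ℕ) (c : Fin G → ℝ) (hc : ∀ j, 0 < c j)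
    (bd br : ℝ) (hbd : 0 < bd) (hbr : 0 < br)
    (dl : Fin L → ℝ) (hdl : ∀ l, 0 ≤ dl l)
    (d : ℝ) (hd : d = ∑ l, dl l)
    (βd βr : Fin G → ℝ) (dld dlr : Fin L → ℝ) (lamd lamr : ℝ)
    -- (i) generator aggregate-bid condition
    (h1 : ∀ j, βd j + βr j = (bd + br - (c j)⁻¹) / (∑ k, (c k)⁻¹) * d)
    -- (ii) market clearing in both stages
    (h2d : ∑ j, (bd * lamd - βd j) = ∑ l, dld l)
    (h2r : ∑ j, (br * lamr - βr j) = ∑ l, dlr l)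
    -- (iii) load feasibility
    (h3 : ∀ l, dld l + dlr l = dl l)
    -- (iv) equal prices at the marginal cost
    (h4d : lamd = d / (∑ k, (c k)⁻¹)) (h4r : lamr = d / (∑ k, (c k)⁻¹)) :
    -- each generator's dispatch maximizes its profit at the given prices
    (∀ j, ∀ gd gr : ℝ,
      lamd * gd + lamr * gr - c j / 2 * (gd + gr) ^ 2 ≤
      lamd * (bd * lamd - βd j) + lamr * (br * lamr - βr j)
        - c j / 2 * ((bd * lamd - βd j) + (br * lamr - βr j)) ^ 2) ∧
    -- each load's allocation minimizes its payment at the given prices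
    (∀ l, ∀ x : ℝ,
      lamd * dld l + lamr * (dl l - dld l) ≤ lamd * x + lamr * (dl l - x)) ∧
    -- total dispatch coincides with the social planner optimum
    (∀ j, (bd * lamd - βd j) + (br * lamr - βr j) = (c j)⁻¹ / (∑ k, (c k)⁻¹) * d) := by
  have hlam : lamr = lamd := by rw [h4d, h4r]
  subst hlam
  set S := ∑ k, (c k)⁻¹ with hS
  have hSpos : ∀ j : Fin G, 0 < S := fun j =>
    Finset.sum_pos' (fun k _ => (inv_pos.2 (hc k)).le)
      ⟨j, Finset.mem_univ j, inv_pos.2 (hc j)⟩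
  have key : ∀ j, (bd * lamr - βd j) + (br * lamr - βr j) = (c j)⁻¹ / S * d := by
    intro j
    rw [h4r]
    linarith [h1 j, (by ring :
      bd * (d / S) - βd j + (br * (d / S) - βr j)
        = (bd + br) / S * d - (βd j + βr j)), (by ring :
      (bd + br - (c j)⁻¹) / S * d = (bd + br) / S * d - (c j)⁻¹ / S * d)]
  refine ⟨?_, ?_, key⟩
  · intro j gd gr
    have hS0 : S ≠ 0 := (hSpos j).ne'
    have hcj := hc j
    have hg' : c j * ((bd * lamr - βd j) + (br * lamr - βr j)) = lamr := by
      rw [key j, h4r]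
      field_simp
    have hmax := profit_max_aux (c j) lamr (gd + gr)
      ((bd * lamr - βd j) + (br * lamr - βr j)) hcj hg'
    nlinarith [hmax]
  · intro l x
    have : lamr * dld l + lamr * (dl l - dld l) = lamr * x + lamr * (dl l - x) := by ring
    exact this.le
end

section
/- Fix day-ahead dispatches g_j^d and real-time total demand d^r, and suppose |𝒢| > 1. A profile (β_j^r)_{j∈𝒢} with resulting clearing price λ^r = (d^r + Σ_j β_j^r)/(b^r|𝒢|) and dispatches g_j^r = b^r λ^r − β_j^r is a Nash equilibrium of the real-time subgame (each generator j maximizing λ^r g_j^r + λ^d g_j^d − (c_j/2)(g_j^d+g_j^r)² over β_j^r, anticipating the price's dependence on β_j^r) if and only if for every j: g_j^r/(b^r(|𝒢|−1)) − λ^r + c_j(g_j^d + g_j^r) = 0. Equivalently, (g_j^r)_j and λ^r form the optimal primal-dual pair of the strictly convex program min Σ_j [ (g_j^r)²/(2 b^r(|𝒢|−1)) + (c_j/2)(g_j^d+g_j^r)² ] subject to Σ_j g_j^r = d^r. -/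
open Finset

private lemma quad_max_iff {a K : ℝ} (hK : 0 < K) :
    (∀ t : ℝ, t * a - t ^ 2 * K ≤ 0) ↔ a = 0 := by
  constructor
  · intro h
    have h1 := h (a / (2 * K))
    have hK' : K ≠ 0 := ne_of_gt hK
    have e : a / (2 * K) * a - (a / (2 * K)) ^ 2 * K = a ^ 2 / (4 * K) := by
      field_simp; ring
    rw [e] at h1
    have : a ^ 2 ≤ 0 := by
      by_contra hpos
      push_neg at hpos
      have : 0 < a ^ 2 / (4 * K) := div_pos hpos (by linarith)
      linarith
    have := sq_nonneg a
    have : a ^ 2 = 0 := le_antisymm ‹a ^ 2 ≤ 0› (sq_nonneg a)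
    exact pow_eq_zero_iff (by norm_num) |>.mp this
  · rintro rfl t
    nlinarith [sq_nonneg t]

private lemma conv_step {B cj g h gd lam : ℝ} (hB : 0 < B) (hc : 0 < cj)
    (hfoc : g / B - lam + cj * (gd + g) = 0) :
    g ^ 2 / (2 * B) + cj / 2 * (gd + g) ^ 2 + lam * (h - g) ≤
      h ^ 2 / (2 * B) + cj / 2 * (gd + h) ^ 2 := by
  have hB' : B ≠ 0 := ne_of_gt hB
  have hlam : lam = g / B + cj * (gd + g) := by linarith
  subst hlam
  have expand : h ^ 2 / (2 * B) + cj / 2 * (gd + h) ^ 2 -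
      (g ^ 2 / (2 * B) + cj / 2 * (gd + g) ^ 2 + (g / B + cj * (gd + g)) * (h - g)) =
      (h - g) ^ 2 / (2 * B) + cj / 2 * (h - g) ^ 2 := by
    field_simp; ring
  nlinarith [div_nonneg (sq_nonneg (h - g)) (by linarith : (0:ℝ) ≤ 2 * B),
    mul_nonneg (by linarith : (0:ℝ) ≤ cj / 2) (sq_nonneg (h - g))]

/-- Real-time subgame: with price-anticipating generators bidding intercepts, a
bid profile is a Nash equilibrium iff every generator's first-order condition
`g_j^r/(bʳ(G-1)) - λʳ + c_j (g_j^d + g_j^r) = 0` holds; and the first-order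
conditions together with market clearing make the dispatch optimal for the
strictly convex augmented planner problem, with `λʳ` as the multiplier. -/
theorem realtime_subgame_nash_iff_foc
    (G : ℕ) (hG : 1 < G) (c : Fin G → ℝ) (hc : ∀ j, 0 < c j)
    (br lamd : ℝ) (hbr : 0 < br) (gd : Fin G → ℝ) (dr : ℝ)
    (β : Fin G → ℝ)
    -- clearing price as a function of the bid profile
    (price : (Fin G → ℝ) → ℝ)
    (hprice : ∀ b : Fin G → ℝ, price b = (dr + ∑ k, b k) / (br * G))
    -- generator j's profit as a function of the bid profile
    (π : Fin G → (Fin G → ℝ) → ℝ)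
    (hπ : ∀ j b, π j b =
      price b * (br * price b - b j) + lamd * gd j
        - c j / 2 * (gd j + (br * price b - b j)) ^ 2) :
    ((∀ j, ∀ β' : ℝ, π j (Function.update β j β') ≤ π j β) ↔
      (∀ j, (br * price β - β j) / (br * (G - 1)) - price β
            + c j * (gd j + (br * price β - β j)) = 0)) ∧
    ((∀ j, (br * price β - β j) / (br * (G - 1)) - price β
            + c j * (gd j + (br * price β - β j)) = 0) →
      (∑ j, (br * price β - β j) = dr) →
      ∀ h : Fin G → ℝ, (∑ j, h j = dr) →
        ∑ j, ((br * price β - β j) ^ 2 / (2 * br * (G - 1))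
              + c j / 2 * (gd j + (br * price β - β j)) ^ 2) ≤
        ∑ j, ((h j) ^ 2 / (2 * br * (G - 1)) + c j / 2 * (gd j + h j) ^ 2)) := by
  have hGn : (1:ℝ) < (G:ℝ) := by exact_mod_cast hG
  have hG0 : (G:ℝ) ≠ 0 := by linarith
  have hG1 : (G:ℝ) - 1 ≠ 0 := by linarith
  have hbr' : br ≠ 0 := ne_of_gt hbr
  -- sum after updating one coordinate
  have hsumupd : ∀ (j : Fin G) (β' : ℝ),
      ∑ k, Function.update β j β' k = (∑ k, β k) - β j + β' := by
    intro j β'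
    rw [Finset.sum_update_of_mem (Finset.mem_univ j),
      Finset.sum_sdiff_eq_sub (Finset.subset_univ {j}), Finset.sum_singleton]
    ring
  -- explicit quadratic expansion of the deviation payoff
  have hΔ : ∀ (j : Fin G) (β' : ℝ), π j (Function.update β j β') =
      π j β + (β' - β j) * ((((G:ℝ) - 1) / G) *
        ((br * price β - β j) / (br * ((G:ℝ) - 1)) - price β
          + c j * (gd j + (br * price β - β j))))
      - (β' - β j) ^ 2 *
        ((((G:ℝ) - 1) / (br * (G:ℝ) ^ 2)) + c j * ((G:ℝ) - 1) ^ 2 / (2 * (G:ℝ) ^ 2)) := by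
    intro j β'
    rw [hπ, hπ, hprice, hprice, hsumupd, Function.update_self]
    field_simp
    ring
  have hKpos : ∀ j : Fin G,
      0 < (((G:ℝ) - 1) / (br * (G:ℝ) ^ 2)) + c j * ((G:ℝ) - 1) ^ 2 / (2 * (G:ℝ) ^ 2) := by
    intro j
    have h1 : 0 < ((G:ℝ) - 1) / (br * (G:ℝ) ^ 2) :=
      div_pos (by linarith) (by positivity)
    have h2 : 0 < c j * ((G:ℝ) - 1) ^ 2 / (2 * (G:ℝ) ^ 2) :=
      div_pos (mul_pos (hc j) (by positivity)) (by positivity)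
    linarith
  constructor
  · constructor
    · intro hN j
      set D := (br * price β - β j) / (br * ((G:ℝ) - 1)) - price β
          + c j * (gd j + (br * price β - β j)) with hD
      have h1 : ∀ t : ℝ, t * ((((G:ℝ) - 1) / G) * D)
          - t ^ 2 * ((((G:ℝ) - 1) / (br * (G:ℝ) ^ 2))
            + c j * ((G:ℝ) - 1) ^ 2 / (2 * (G:ℝ) ^ 2)) ≤ 0 := by
        intro t
        have h2 := hN j (β j + t)
        rw [hΔ j (β j + t)] at h2
        have ht : β j + t - β j = t := by ring
        rw [ht] at h2
        linarith
      have h3 := (quad_max_iff (hKpos j)).mp h1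
      have h4 : ((G:ℝ) - 1) / G ≠ 0 := div_ne_zero hG1 hG0
      rcases mul_eq_zero.mp h3 with h5 | h5
      · exact absurd h5 h4
      · exact h5
    · intro hF j β'
      rw [hΔ j β', hF j]
      have := hKpos j
      nlinarith [sq_nonneg (β' - β j)]
  · intro hF hclear h hh
    have hB : (0:ℝ) < br * ((G:ℝ) - 1) := mul_pos hbr (by linarith)
    have key : ∀ j : Fin G,
        (br * price β - β j) ^ 2 / (2 * (br * ((G:ℝ) - 1)))
          + c j / 2 * (gd j + (br * price β - β j)) ^ 2
          + price β * (h j - (br * price β - β j)) ≤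
        (h j) ^ 2 / (2 * (br * ((G:ℝ) - 1))) + c j / 2 * (gd j + h j) ^ 2 := by
      intro j
      exact conv_step hB (hc j) (hF j)
    have hsum := Finset.sum_le_sum (fun j (_ : j ∈ Finset.univ) => key j)
    have hzero : ∑ j, price β * (h j - (br * price β - β j)) = 0 := by
      rw [← Finset.mul_sum, Finset.sum_sub_distrib, hh, hclear]
      ring
    rw [Finset.sum_add_distrib, hzero] at hsum
    have e1 : ∀ j : Fin G, (br * price β - β j) ^ 2 / (2 * br * ((G:ℝ) - 1))
        = (br * price β - β j) ^ 2 / (2 * (br * ((G:ℝ) - 1))) := by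
      intro j; ring_nf
    have e2 : ∀ j : Fin G, (h j) ^ 2 / (2 * br * ((G:ℝ) - 1))
        = (h j) ^ 2 / (2 * (br * ((G:ℝ) - 1))) := by
      intro j; ring_nf
    calc ∑ j, ((br * price β - β j) ^ 2 / (2 * br * ((G:ℝ) - 1))
          + c j / 2 * (gd j + (br * price β - β j)) ^ 2)
        = ∑ j, ((br * price β - β j) ^ 2 / (2 * (br * ((G:ℝ) - 1)))
          + c j / 2 * (gd j + (br * price β - β j)) ^ 2) := by
          exact Finset.sum_congr rfl fun j _ => by rw [e1]
      _ ≤ ∑ j, ((h j) ^ 2 / (2 * (br * ((G:ℝ) - 1))) + c j / 2 * (gd j + h j) ^ 2) := by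
          linarith
      _ = ∑ j, ((h j) ^ 2 / (2 * br * ((G:ℝ) - 1)) + c j / 2 * (gd j + h j) ^ 2) := by
          exact Finset.sum_congr rfl fun j _ => by rw [e2]
end

section
/- The strictly convex augmented program min_{g^r ∈ ℝ^{|𝒢|}} Σ_j [ (g_j^r)²/(2b^r(|𝒢|−1)) + (c_j/2)(g_j^d+g_j^r)² ] subject to Σ_j g_j^r = d^r has the unique solution g_j^r = (1/C_j)·(d^r + Σ_k (c_k g_k^d)/C_k)/(Σ_k C_k⁻¹) − c_j g_j^d / C_j, with optimal multiplier λ^r = (d^r + Σ_k (c_k g_k^d)/C_k)/(Σ_k C_k⁻¹), where C_j := 1/(b^r(|𝒢|−1)) + c_j. -/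
open Finset

/-- The strictly convex augmented program has the stated unique solution, with
optimal multiplier `λʳ = (dʳ + ∑ c_k g_k^d / C_k) / ∑ C_k⁻¹`,
where `C_j = 1/(bʳ(G-1)) + c_j`. -/
theorem augmented_program_unique_solution
    (G : ℕ) (hG : 1 < G) (c : Fin G → ℝ) (hc : ∀ j, 0 < c j)
    (br : ℝ) (hbr : 0 < br) (gd : Fin G → ℝ) (dr : ℝ)
    (C : Fin G → ℝ) (hC : ∀ j, C j = 1 / (br * (G - 1)) + c j)
    (lamr : ℝ)
    (hlamr : lamr = (dr + ∑ k, c k * gd k / C k) / (∑ k, (C k)⁻¹))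
    (gr : Fin G → ℝ)
    (hgr : ∀ j, gr j = lamr / C j - c j * gd j / C j) :
    (∑ j, gr j = dr) ∧
    (∀ h : Fin G → ℝ, (∑ j, h j = dr) →
      ∑ j, ((gr j) ^ 2 / (2 * br * (G - 1)) + c j / 2 * (gd j + gr j) ^ 2) ≤
      ∑ j, ((h j) ^ 2 / (2 * br * (G - 1)) + c j / 2 * (gd j + h j) ^ 2)) ∧
    (∀ h : Fin G → ℝ, (∑ j, h j = dr) →
      (∑ j, ((h j) ^ 2 / (2 * br * (G - 1)) + c j / 2 * (gd j + h j) ^ 2) =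
       ∑ j, ((gr j) ^ 2 / (2 * br * (G - 1)) + c j / 2 * (gd j + gr j) ^ 2)) →
      h = gr) ∧
    (∀ j, gr j / (br * (G - 1)) + c j * (gd j + gr j) = lamr) := by
  have hG1 : ((G:ℝ) - 1) ≠ 0 := by
    have : (1:ℝ) < (G:ℝ) := by exact_mod_cast hG
    linarith
  have hD : (0:ℝ) < br * ((G:ℝ) - 1) := by
    have : (1:ℝ) < (G:ℝ) := by exact_mod_cast hG
    have : (0:ℝ) < (G:ℝ) - 1 := by linarith
    positivity
  have hDne : br * ((G:ℝ) - 1) ≠ 0 := hD.ne'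
  have hCpos : ∀ j, 0 < C j := by
    intro j
    rw [hC j]
    have h1 : 0 < 1 / (br * ((G:ℝ) - 1)) := by positivity
    have := hc j
    linarith
  have hCne : ∀ j, C j ≠ 0 := fun j => (hCpos j).ne'
  have hS : 0 < ∑ k, (C k)⁻¹ :=
    Finset.sum_pos (fun k _ => inv_pos.mpr (hCpos k)) ⟨⟨0, by omega⟩, mem_univ _⟩
  have hl : ∀ j, lamr = C j * gr j + c j * gd j := by
    intro j
    rw [hgr j]
    field_simp [hCne j]
    ring
  -- stationarity
  have hstat : ∀ j, gr j / (br * ((G:ℝ) - 1)) + c j * (gd j + gr j) = lamr := by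
    intro j
    rw [hl j, hC j]
    field_simp [hbr.ne']
    ring
  -- constraint
  have hsum : ∑ j, gr j = dr := by
    have h1 : ∑ j, gr j = lamr * ∑ k, (C k)⁻¹ - ∑ k, c k * gd k / C k := by
      rw [Finset.mul_sum, ← Finset.sum_sub_distrib]
      exact Finset.sum_congr rfl fun j _ => by rw [hgr j, div_eq_mul_inv]
    rw [h1, hlamr, div_mul_cancel₀ _ hS.ne']
    ring
  -- key pointwise identity
  have hkey : ∀ (j : Fin G) (x : ℝ),
      x ^ 2 / (2 * br * ((G:ℝ) - 1)) + c j / 2 * (gd j + x) ^ 2 =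
      (gr j ^ 2 / (2 * br * ((G:ℝ) - 1)) + c j / 2 * (gd j + gr j) ^ 2) +
        lamr * (x - gr j) + C j / 2 * (x - gr j) ^ 2 := by
    intro j x
    rw [hl j, hC j]
    field_simp [hbr.ne']
    ring
  have hdecomp : ∀ h : Fin G → ℝ, (∑ j, h j = dr) →
      ∑ j, ((h j) ^ 2 / (2 * br * ((G:ℝ) - 1)) + c j / 2 * (gd j + h j) ^ 2) =
      (∑ j, ((gr j) ^ 2 / (2 * br * ((G:ℝ) - 1)) + c j / 2 * (gd j + gr j) ^ 2)) +
        ∑ j, C j / 2 * (h j - gr j) ^ 2 := by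
    intro h hh
    have e1 : ∑ j, ((h j) ^ 2 / (2 * br * ((G:ℝ) - 1)) + c j / 2 * (gd j + h j) ^ 2) =
        ∑ j, (((gr j) ^ 2 / (2 * br * ((G:ℝ) - 1)) + c j / 2 * (gd j + gr j) ^ 2) +
          lamr * (h j - gr j) + C j / 2 * (h j - gr j) ^ 2) :=
      Finset.sum_congr rfl fun j _ => hkey j (h j)
    rw [e1, Finset.sum_add_distrib, Finset.sum_add_distrib, ← Finset.mul_sum,
      Finset.sum_sub_distrib, hh, hsum, sub_self, mul_zero, add_zero]
  refine ⟨hsum, ?_, ?_, hstat⟩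
  · intro h hh
    rw [hdecomp h hh]
    exact le_add_of_nonneg_right (Finset.sum_nonneg fun j _ =>
      mul_nonneg (by linarith [hCpos j]) (sq_nonneg _))
  · intro h hh heq
    rw [hdecomp h hh] at heq
    have h0 : ∑ j, C j / 2 * (h j - gr j) ^ 2 = 0 := by linarith
    have hz := (Finset.sum_eq_zero_iff_of_nonneg
      (fun j _ => mul_nonneg (by linarith [hCpos j]) (sq_nonneg (h j - gr j)))).mp h0
    funext j
    have hj := hz j (mem_univ j)
    have h2 : (h j - gr j) ^ 2 = 0 := by
      rcases mul_eq_zero.mp hj with h' | h'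
      · exact absurd h' (div_pos (hCpos j) two_pos).ne'
      · exact h'
    have := pow_eq_zero_iff (n := 2) (by norm_num) |>.mp h2
    linarith
end

section
/- In the real-time subgame equilibrium with truthful day-ahead dispatch (g_j^d = c_j⁻¹ λ^d with λ^d = d^d/Σ_k c_k⁻¹), the real-time price and dispatches are λ^r = d^r/Σ_k C_k⁻¹ + d^d/Σ_k c_k⁻¹ and g_j^r = (1/C_j)·d^r/(Σ_k C_k⁻¹), where C_j := 1/(b^r(|𝒢|−1)) + c_j. In particular, if d^r > 0 then λ^r exceeds the uniform marginal-cost price d/Σ_k c_k⁻¹ where d = d^d + d^r. -/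
open Finset

/-- Real-time subgame equilibrium under a day-ahead MPM policy (truthful
day-ahead dispatch): the real-time price and dispatches satisfy the stated
closed forms, and if `dʳ > 0` the real-time price strictly exceeds the uniform
marginal-cost price `d / ∑ c_k⁻¹`. -/
theorem realtime_subgame_with_da_mpm
    (G : ℕ) (hG : 1 < G) (c : Fin G → ℝ) (hc : ∀ j, 0 < c j)
    (br : ℝ) (hbr : 0 < br)
    (C : Fin G → ℝ) (hC : ∀ j, C j = 1 / (br * (G - 1)) + c j)
    (dd dr d : ℝ) (hd : d = dd + dr)
    (lamd : ℝ) (hlamd : lamd = dd / (∑ k, (c k)⁻¹))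
    (gd : Fin G → ℝ) (hgd : ∀ j, gd j = (c j)⁻¹ * lamd)
    (gr : Fin G → ℝ) (lamr : ℝ)
    -- subgame-equilibrium first-order conditions and market clearing
    (hfoc : ∀ j, gr j / (br * (G - 1)) - lamr + c j * (gd j + gr j) = 0)
    (hclear : ∑ j, gr j = dr) :
    lamr = dr / (∑ k, (C k)⁻¹) + dd / (∑ k, (c k)⁻¹) ∧
    (∀ j, gr j = (C j)⁻¹ * (dr / (∑ k, (C k)⁻¹))) ∧
    (0 < dr → d / (∑ k, (c k)⁻¹) < lamr) := by
  have hG1 : (1:ℝ) < (G:ℝ) := by exact_mod_cast hG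
  have hb : (0:ℝ) < br * ((G:ℝ) - 1) := mul_pos hbr (by linarith)
  haveI hne : Nonempty (Fin G) := Fin.pos_iff_nonempty.mp (by omega)
  have hinv : 0 < 1 / (br * ((G:ℝ) - 1)) := div_pos one_pos hb
  have hCpos : ∀ j, 0 < C j := fun j => by
    rw [hC j]; have := hc j; linarith
  have hSC : 0 < ∑ k, (C k)⁻¹ := by
    apply Finset.sum_pos (fun k _ => inv_pos.mpr (hCpos k))
    exact Finset.univ_nonempty
  have hSc : 0 < ∑ k, (c k)⁻¹ := by
    apply Finset.sum_pos (fun k _ => inv_pos.mpr (hc k))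
    exact Finset.univ_nonempty
  have key : ∀ j, gr j = (C j)⁻¹ * (lamr - lamd) := by
    intro j
    have h := hfoc j
    rw [hgd j] at h
    have hcj := (hc j).ne'
    rw [inv_mul_eq_div, eq_div_iff (hCpos j).ne', hC j]
    field_simp at h ⊢
    linear_combination h
  have hsum : dr = (lamr - lamd) * ∑ k, (C k)⁻¹ := by
    rw [← hclear]
    rw [Finset.sum_congr rfl (fun j _ => key j)]
    rw [← Finset.sum_mul]
    ring
  have hlam : lamr = dr / (∑ k, (C k)⁻¹) + dd / (∑ k, (c k)⁻¹) := by
    rw [← hlamd]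
    have h2 : dr / (∑ k, (C k)⁻¹) = lamr - lamd := by
      rw [hsum, mul_div_assoc, div_self hSC.ne', mul_one]
    linarith
  refine ⟨hlam, fun j => ?_, fun hdr => ?_⟩
  · rw [key j, hlam, hlamd]
    ring
  · rw [hlam, hd]
    have hlt : ∑ k, (C k)⁻¹ < ∑ k, (c k)⁻¹ := by
      apply Finset.sum_lt_sum_of_nonempty Finset.univ_nonempty
      intro k _
      apply inv_strictAnti₀ (hc k)
      rw [hC k]
      have : 0 < 1 / (br * ((G:ℝ) - 1)) := by positivity
      linarith
    have : dr / (∑ k, (c k)⁻¹) < dr / (∑ k, (C k)⁻¹) :=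
      div_lt_div_of_pos_left hdr hSC hlt
    have hsplit : (dd + dr) / (∑ k, (c k)⁻¹)
        = dd / (∑ k, (c k)⁻¹) + dr / (∑ k, (c k)⁻¹) := by ring
    rw [hsplit]
    linarith
end

section
/- At the Nash equilibrium of the two-stage market with a day-ahead MPM policy and |𝒢| > 1 generators, |𝒩| := |ℒ| ≥ 1 loads, total demand d > 0, the day-ahead aggregate demand is d^d = (1 − (1/(|ℒ|+1)) · Σ_j C_j⁻¹ / Σ_j c_j⁻¹) · d, where C_j = 1/(b^r(|𝒢|−1)) + c_j. This satisfies d/2 < d^d < d, and correspondingly 0 < d^r = d − d^d < d/2. -/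
open Finset

/-- At the day-ahead-MPM Nash equilibrium, the aggregate day-ahead demand
`dᵈ = (1 - (1/(L+1)) ∑ C_j⁻¹ / ∑ c_j⁻¹) d` satisfies `d/2 < dᵈ < d`, and
correspondingly `0 < dʳ = d - dᵈ < d/2`. -/
theorem da_mpm_day_ahead_allocation
    (G L : ℕ) (hG : 1 < G) (hL : 1 ≤ L)
    (c : Fin G → ℝ) (hc : ∀ j, 0 < c j) (br : ℝ) (hbr : 0 < br)
    (C : Fin G → ℝ) (hC : ∀ j, C j = 1 / (br * (G - 1)) + c j)
    (d : ℝ) (hd : 0 < d)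
    (dd dr : ℝ)
    (hdd : dd = (1 - (1 / (L + 1)) * (∑ j, (C j)⁻¹) / (∑ j, (c j)⁻¹)) * d)
    (hdr : dr = d - dd) :
    d / 2 < dd ∧ dd < d ∧ 0 < dr ∧ dr < d / 2 := by
  have hG1 : (0:ℝ) < (G:ℝ) - 1 := by
    have : (1:ℝ) < (G:ℝ) := by exact_mod_cast hG
    linarith
  have hCpos : ∀ j, 0 < C j := by
    intro j
    rw [hC j]
    have : 0 < 1 / (br * ((G:ℝ) - 1)) := by positivity
    linarith [hc j]
  have hClt : ∀ j, (C j)⁻¹ < (c j)⁻¹ := by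
    intro j
    apply inv_strictAnti₀ (hc j)
    rw [hC j]
    have : 0 < 1 / (br * ((G:ℝ) - 1)) := by positivity
    linarith
  have hne : (Finset.univ : Finset (Fin G)).Nonempty := by
    haveI : Nonempty (Fin G) := Fin.pos_iff_nonempty.mp (by omega)
    exact Finset.univ_nonempty
  have hSumC : 0 < ∑ j, (C j)⁻¹ :=
    Finset.sum_pos (fun j _ => inv_pos.mpr (hCpos j)) hne
  have hSumlt : ∑ j, (C j)⁻¹ < ∑ j, (c j)⁻¹ :=
    Finset.sum_lt_sum_of_nonempty hne (fun j _ => hClt j)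
  have hSumc : 0 < ∑ j, (c j)⁻¹ := lt_trans hSumC hSumlt
  set S := ∑ j, (C j)⁻¹
  set T := ∑ j, (c j)⁻¹
  have hratio : 0 < S / T ∧ S / T < 1 := by
    constructor
    · positivity
    · exact (div_lt_one hSumc).mpr hSumlt
  have hL2 : (2:ℝ) ≤ (L:ℝ) + 1 := by
    have : (1:ℝ) ≤ (L:ℝ) := by exact_mod_cast hL
    linarith
  have hLpos : (0:ℝ) < (L:ℝ) + 1 := by linarith
  have hinv : (1:ℝ) / ((L:ℝ) + 1) ≤ 1/2 := by
    apply div_le_div_of_nonneg_left (by norm_num) (by norm_num) hL2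
  have hinvpos : (0:ℝ) < 1 / ((L:ℝ) + 1) := by positivity
  set r := (1 / ((L:ℝ) + 1)) * S / T with hr
  have hrpos : 0 < r := by
    rw [hr]; positivity
  have hrlt : r < 1/2 := by
    rw [hr, mul_div_assoc]
    calc (1 / ((L:ℝ) + 1)) * (S / T) ≤ (1/2) * (S / T) := by
          apply mul_le_mul_of_nonneg_right hinv (le_of_lt hratio.1)
      _ < (1/2) * 1 := by
          apply mul_lt_mul_of_pos_left hratio.2 (by norm_num)
      _ = 1/2 := by ring
  have hdd' : dd = (1 - r) * d := hdd
  constructor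
  · rw [hdd']; nlinarith
  constructor
  · rw [hdd']; nlinarith
  constructor
  · rw [hdr, hdd']; nlinarith
  · rw [hdr, hdd']; nlinarith
end

section
/- At the day-ahead-MPM Nash equilibrium, the total generator profit is strictly below the competitive-equilibrium level: the ratio equals 1 − (Σ_j C_j⁻¹/Σ_j c_j⁻¹)·2|ℒ|/(|ℒ|+1)² − Δ/((|ℒ|+1)² Σ_j c_j⁻¹) < 1, since Σ_j C_j⁻¹ > 0, |ℒ| ≥ 1, and Δ ≥ 0. -/
open Finset

/-- At the day-ahead-MPM Nash equilibrium, the total generator profit is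
strictly below the competitive-equilibrium level: the normalized ratio
`1 - (∑ C_j⁻¹/∑ c_j⁻¹)·2L/(L+1)² - Δ/((L+1)² ∑ c_j⁻¹)` is strictly less
than 1. -/
theorem da_mpm_generator_profit_below_competitive
    (G L : ℕ) (hG : 2 ≤ G) (hL : 1 ≤ L)
    (c : Fin G → ℝ) (hc : ∀ j, 0 < c j) (br : ℝ) (hbr : 0 < br)
    (C : Fin G → ℝ) (hC : ∀ j, C j = 1 / (br * (G - 1)) + c j)
    (Δ : ℝ)
    (hΔ : Δ = (∑ j, c j / (C j) ^ 2) - (∑ j, (C j)⁻¹) ^ 2 / (∑ j, (c j)⁻¹))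
    (ratio : ℝ)
    (hratio : ratio = 1 - ((∑ j, (C j)⁻¹) / (∑ j, (c j)⁻¹)) * (2 * L) / (L + 1) ^ 2
      - Δ / ((L + 1) ^ 2 * ∑ j, (c j)⁻¹)) :
    ratio < 1 := by
  have hG1 : (1 : ℝ) ≤ (G : ℝ) - 1 := by
    have : (2 : ℝ) ≤ (G : ℝ) := by exact_mod_cast hG
    linarith
  have hbr1 : 0 < br * ((G : ℝ) - 1) := mul_pos hbr (by linarith)
  have hCpos : ∀ j, 0 < C j := by
    intro j
    rw [hC j]
    have h1 : 0 < 1 / (br * ((G : ℝ) - 1)) := one_div_pos.mpr hbr1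
    have := hc j
    linarith
  haveI : Nonempty (Fin G) := ⟨⟨0, by omega⟩⟩
  have hsumc : 0 < ∑ j, (c j)⁻¹ := by
    apply Finset.sum_pos (fun j _ => by have := hc j; positivity) Finset.univ_nonempty
  have hsumC : 0 < ∑ j, (C j)⁻¹ := by
    apply Finset.sum_pos (fun j _ => by have := hCpos j; positivity) Finset.univ_nonempty
  -- Cauchy–Schwarz: (∑ C⁻¹)² ≤ (∑ c/C²)(∑ c⁻¹)
  have hCS : (∑ j, (C j)⁻¹) ^ 2 ≤ (∑ j, c j / (C j) ^ 2) * (∑ j, (c j)⁻¹) := by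
    have h := Finset.sum_mul_sq_le_sq_mul_sq (Finset.univ : Finset (Fin G))
      (fun j => Real.sqrt (c j) / C j) (fun j => (Real.sqrt (c j))⁻¹)
    have e1 : ∀ j : Fin G, Real.sqrt (c j) / C j * (Real.sqrt (c j))⁻¹ = (C j)⁻¹ := by
      intro j
      have hs : Real.sqrt (c j) ≠ 0 := by have := hc j; positivity
      field_simp
    have e2 : ∀ j : Fin G, (Real.sqrt (c j) / C j) ^ 2 = c j / (C j) ^ 2 := by
      intro j
      rw [div_pow, Real.sq_sqrt (hc j).le]
    have e3 : ∀ j : Fin G, ((Real.sqrt (c j))⁻¹) ^ 2 = (c j)⁻¹ := by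
      intro j
      rw [inv_pow, Real.sq_sqrt (hc j).le]
    simpa only [e1, e2, e3] using h
  have hΔ0 : 0 ≤ Δ := by
    rw [hΔ]
    rw [sub_nonneg, div_le_iff₀ hsumc]
    exact hCS
  have hterm1 : 0 < ((∑ j, (C j)⁻¹) / (∑ j, (c j)⁻¹)) * (2 * L) / (L + 1) ^ 2 := by
    have hLpos : (0 : ℝ) < (L : ℝ) := by exact_mod_cast hL
    have h1 : (0 : ℝ) < (L : ℝ) + 1 := by linarith
    positivity
  have hterm2 : 0 ≤ Δ / ((L + 1) ^ 2 * ∑ j, (c j)⁻¹) := by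
    have h1 : (0 : ℝ) < (L : ℝ) + 1 := by positivity
    positivity
  rw [hratio]
  linarith
end

section
/- Under a real-time MPM policy, the unique two-stage Nash equilibrium allocates all demand to real time: d_l^d = 0 and d_l^r = d_l for every load l, with equal prices λ^d = λ^r = d/Σ_j c_j⁻¹, generator day-ahead dispatch g_j^d = 0, real-time dispatch g_j^r = (c_j⁻¹/Σ_k c_k⁻¹)d, and day-ahead intercept bids β_j^d = b^d d/Σ_k c_k⁻¹. That is, the system of equilibrium conditions — (i) β^{d,𝒢} := Σ_j β_j^d satisfies β_j^d = b^d d/Σ_k c_k⁻¹ − ((G−2)/(G(G−1)))d^d for all j (generator first-order conditions), (ii) d^d = (L/(L+1))·(b^d G/Σ_k c_k⁻¹)·d − (L/(L+1))·β^{d,𝒢} (load first-order conditions), and (iii) λ^d = (d^d + β^{d,𝒢})/(b^d G) — has the unique solution d^d = 0, λ^d = d/Σ_k c_k⁻¹. -/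
open Finset

/-- Real-time MPM policy: the system of day-ahead equilibrium conditions has the
unique solution with all demand in real time, `dᵈ = 0`, equal prices
`λᵈ = λʳ = d/∑ c_j⁻¹`, zero day-ahead generator dispatch, real-time dispatch
`g_j^r = (c_j⁻¹/∑ c_k⁻¹) d`, and bids `β_j^d = bᵈ d/∑ c_k⁻¹`. -/
theorem rt_mpm_unique_nash_equilibrium
    (G L : ℕ) (hG : 2 ≤ G) (hL : 1 ≤ L)
    (c : Fin G → ℝ) (hc : ∀ j, 0 < c j)
    (bd : ℝ) (hbd : 0 < bd) (d : ℝ) (hd : 0 < d)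
    (β : Fin G → ℝ) (dd lamd : ℝ)
    -- (i) generator first-order conditions
    (hgen : ∀ j, β j = bd * d / (∑ k, (c k)⁻¹)
      - (((G : ℝ) - 2) / ((G : ℝ) * ((G : ℝ) - 1))) * dd)
    -- (ii) load first-order conditions
    (hload : dd = ((L : ℝ) / ((L : ℝ) + 1)) * (bd * (G : ℝ) / (∑ k, (c k)⁻¹)) * d
      - ((L : ℝ) / ((L : ℝ) + 1)) * (∑ j, β j))
    -- (iii) day-ahead market clearing
    (hclear : lamd = (dd + ∑ j, β j) / (bd * (G : ℝ))) :
    dd = 0 ∧ lamd = d / (∑ k, (c k)⁻¹) ∧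
    (∀ j, β j = bd * d / (∑ k, (c k)⁻¹)) ∧
    (∀ j, bd * lamd - β j = 0) ∧
    (∀ j, (c j)⁻¹ * (d / (∑ k, (c k)⁻¹)) - (bd * lamd - β j)
      = (c j)⁻¹ / (∑ k, (c k)⁻¹) * d) := by
  set S : ℝ := ∑ k, (c k)⁻¹ with hS
  have hSpos : 0 < S :=
    Finset.sum_pos (fun k _ => inv_pos.mpr (hc k)) ⟨⟨0, by omega⟩, mem_univ _⟩
  have hGR : (2 : ℝ) ≤ (G : ℝ) := by exact_mod_cast hG
  have hG0 : (G : ℝ) ≠ 0 := by positivity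
  have hG1 : (G : ℝ) - 1 ≠ 0 := by nlinarith
  have hLR : (1 : ℝ) ≤ (L : ℝ) := by exact_mod_cast hL
  have hL1 : (L : ℝ) + 1 ≠ 0 := by positivity
  have hsum : ∑ j, β j = (G : ℝ) * (bd * d / S)
      - (G : ℝ) * ((((G : ℝ) - 2) / ((G : ℝ) * ((G : ℝ) - 1))) * dd) := by
    rw [Finset.sum_congr rfl (fun j _ => hgen j)]
    simp [Finset.sum_sub_distrib, Finset.card_univ, mul_comm]
  have hdd : dd = 0 := by
    rw [hsum] at hload
    have key : dd * (((L : ℝ) + 1) * ((G : ℝ) - 1) - (L : ℝ) * ((G : ℝ) - 2)) = 0 := by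
      have h1 : (G : ℝ) * ((((G : ℝ) - 2) / ((G : ℝ) * ((G : ℝ) - 1))) * dd)
          = ((G : ℝ) - 2) / ((G : ℝ) - 1) * dd := by
        field_simp
      have h2 : ((L : ℝ) / ((L : ℝ) + 1)) * (bd * (G : ℝ) / S) * d
          = ((L : ℝ) / ((L : ℝ) + 1)) * ((G : ℝ) * (bd * d / S)) := by ring
      rw [h1, h2] at hload
      have h3 : dd = ((L : ℝ) / ((L : ℝ) + 1)) * (((G : ℝ) - 2) / ((G : ℝ) - 1)) * dd := by
        nth_rewrite 1 [hload]; ring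
      have hG1' : (0 : ℝ) < (G : ℝ) - 1 := by linarith
      have hKd0 : 0 ≤ ((G : ℝ) - 2) / ((G : ℝ) - 1) :=
        div_nonneg (by linarith) (by linarith)
      have hKd1 : ((G : ℝ) - 2) / ((G : ℝ) - 1) < 1 := by
        rw [div_lt_one hG1']; linarith
      have hr0 : 0 ≤ (L : ℝ) / ((L : ℝ) + 1) := by positivity
      have hr1 : (L : ℝ) / ((L : ℝ) + 1) < 1 := by
        rw [div_lt_one (by linarith)]; linarith
      have hrk : (L : ℝ) / ((L : ℝ) + 1) * (((G : ℝ) - 2) / ((G : ℝ) - 1)) < 1 := by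
        nlinarith
      have : dd * (1 - (L : ℝ) / ((L : ℝ) + 1) * (((G : ℝ) - 2) / ((G : ℝ) - 1))) = 0 := by
        nlinarith [h3]
      rcases mul_eq_zero.mp this with h | h
      · rw [h]; ring
      · exfalso; nlinarith
    have hfac : ((L : ℝ) + 1) * ((G : ℝ) - 1) - (L : ℝ) * ((G : ℝ) - 2) ≠ 0 := by
      nlinarith
    rcases mul_eq_zero.mp key with h | h
    · exact h
    · exact absurd h hfac
  subst hdd
  have hβ : ∀ j, β j = bd * d / S := by
    intro j; rw [hgen j]; ring
  have hsum0 : ∑ j, β j = (G : ℝ) * (bd * d / S) := by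
    rw [Finset.sum_congr rfl (fun j _ => hβ j)]
    simp [Finset.card_univ, mul_comm]
  have hlam : lamd = d / S := by
    rw [hclear, hsum0, zero_add]
    rw [div_eq_div_iff (by positivity) hSpos.ne']
    have : S * S⁻¹ = 1 := mul_inv_cancel₀ hSpos.ne'
    ring_nf
    rw [mul_assoc, this, mul_one]
  refine ⟨rfl, hlam, hβ, ?_, ?_⟩
  · intro j; rw [hlam, hβ j]; ring
  · intro j
    rw [hlam, hβ j]; ring
end
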